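/- Let G be a finite non-nilpotent group. Then the induced subgraph of the non-nilpotent graph on G \ nil(G) is connected with diameter at most 6. Moreover, any two vertices x, y with π(x) ≠ π(y) (distinct sets of prime divisors of their orders) are joined by a path of length at most 4. -/

import Mathlib

def nilizer {G : Type*} [Group G] (x : G) : Set G :=
  {g | Group.IsNilpotent (Subgroup.closure ({x, g} : Set G))}

def nilSet (G : Type*) [Group G] : Set G :=
  {x | ∀ y : G, Group.IsNilpotent (Subgroup.closure ({x, y} : Set G))}

/-- The non-nilpotent graph of a group: distinct `x, y` are adjacent iff
`⟨x, y⟩` is not nilpotent. -/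
def nonNilpGraph (G : Type*) [Group G] : SimpleGraph G where
  Adj x y := x ≠ y ∧ ¬ Group.IsNilpotent (Subgroup.closure ({x, y} : Set G))
  symm := by
    constructor
    rintro x y ⟨h1, h2⟩
    exact ⟨h1.symm, by rwa [Set.pair_comm]⟩
  loopless := by constructor; rintro x ⟨h, -⟩; exact h rfl

/-!
Every vertex `x ∉ nil(G)` has a power `a` of prime power order, say a `q`-element, with
`a ∉ nil(G)`: if both the `q`-part and the `q'`-part of `x` lay in `nil(G)`, then so would `x`,
because elements of coprime orders in a nilpotent group commute. Such an `a` generates a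
non-nilpotent subgroup with some element `m` of order prime to `q`: otherwise `a` centralizes all
`q'`-elements, its normal closure is a `q`-group, and `⟨a, g⟩` is nilpotent for every `g`.

Now write `~` for adjacency, let `b ∈ ⟨y⟩` be a prime power element outside `nil(G)`, and let
`x ~ m` with `m` of order prime to `|b|`. Either `m ~ b`, giving the walk `x ~ m ~ y`, or `m` and
`b` commute, lie in `⟨m b⟩`, and `x ~ m b ~ s ~ y` for any neighbour `s` of `b`. For `x, y` with
parts of the same prime `q` take `m` as above; for different primes go first from `x` to a
neighbour `t` of `a` and use `a` in the role of `m`. Any two vertices are therefore joined by a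
walk of length at most `4`.
-/

open Subgroup

section GroupLemmas
variable {G : Type*} [Group G]

theorem isNilpotent_of_le {H K : Subgroup G} (hHK : H ≤ K) (hK : Group.IsNilpotent K) :
    Group.IsNilpotent H :=
  Group.nilpotent_of_mulEquiv (subgroupOfEquivOfLe hHK)

theorem isNilpotent_closure_pair_of_commute {x y : G} (h : Commute x y) :
    Group.IsNilpotent (closure ({x, y} : Set G)) :=
  ⟨1, upperCentralSeries_one_eq_top_iff.mpr <| isMulCommutative_closure <| by
    rintro a (rfl | rfl) b (rfl | rfl) <;> first | rfl | exact h.eq | exact h.eq.symm⟩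

theorem isNilpotent_sup_of_commute {H K : Subgroup G} (hH : Group.IsNilpotent H)
    (hK : Group.IsNilpotent K) (hHK : ∀ h ∈ H, ∀ k ∈ K, Commute h k) :
    Group.IsNilpotent (H ⊔ K : Subgroup G) := by
  have hf := MonoidHom.noncommCoprod_range H.subtype K.subtype fun h k ↦ hHK h h.2 k k.2
  rw [range_subtype, range_subtype] at hf
  exact hf ▸ Group.nilpotent_of_surjective _ (MonoidHom.rangeRestrict_surjective _)

open scoped commutatorElement in
theorem Group.IsNilpotent.commute_of_coprime_orderOf [Group.IsNilpotent G] [Finite G]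
    {u v : G} (huv : (orderOf u).Coprime (orderOf v)) : Commute u v := by
  refine Group.nilpotent_center_quotient_ind
    (P := fun H _ _ ↦ Finite H → ∀ u v : H, (orderOf u).Coprime (orderOf v) → Commute u v)
    G (fun H _ _ _ u v _ ↦ Subsingleton.elim _ _) ?_ ‹_› u v huv
  clear u v huv
  intro H _ _ ih _ u v huv
  set c := ⁅u, v⁆ with hc_def
  -- `u` and `v` commute modulo the centre, so `c` is central; then `c ^ |v| = ⁅u, v ^ |v|⁆ = 1`
  -- and likewise `c ^ |u| = 1`.
  have hc : ∀ g, Commute c g := by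
    refine fun g ↦ ((mem_center_iff.mp ?_) g).symm
    rw [← QuotientGroup.ker_mk' (center H), MonoidHom.mem_ker, map_commutatorElement,
      commutatorElement_eq_one_iff_commute]
    exact ih inferInstance _ _ ((huv.coprime_dvd_left (orderOf_map_dvd _ u)).coprime_dvd_right
      (orderOf_map_dvd _ v))
  have hcv : c ^ orderOf v = 1 := by
    have : (u * v * u⁻¹) ^ orderOf v = 1 := by rw [conj_pow, pow_orderOf_eq_one]; group
    rwa [show u * v * u⁻¹ = c * v by simp [c, commutatorElement_def],
      (hc v).mul_pow, pow_orderOf_eq_one, mul_one] at this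
  have hcu : c ^ orderOf u = 1 := by
    have : (v * u⁻¹ * v⁻¹) ^ orderOf u = 1 := by
      rw [conj_pow, inv_pow, pow_orderOf_eq_one]; group
    rwa [show v * u⁻¹ * v⁻¹ = u⁻¹ * c by simp [c, commutatorElement_def, mul_assoc],
      (hc u⁻¹).symm.mul_pow, inv_pow, pow_orderOf_eq_one, inv_one, one_mul] at this
  rw [← commutatorElement_eq_one_iff_commute, ← hc_def, ← orderOf_eq_one_iff, ← Nat.dvd_one,
    ← huv.gcd_eq_one]
  exact Nat.dvd_gcd (orderOf_dvd_of_pow_eq_one hcu) (orderOf_dvd_of_pow_eq_one hcv)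

end GroupLemmas

section Decomposition
variable {G : Type*} [Group G]

theorem exists_zpow_mul_zpow_eq_self {g : G} {d e : ℕ} (hde : d.Coprime e)
    (hg : g ^ (d * e) = 1) :
    ∃ i j : ℤ, g ^ i * g ^ j = g ∧ (g ^ i) ^ d = 1 ∧ (g ^ j) ^ e = 1 := by
  have key : ∀ k : ℤ, (g ^ (d * e : ℕ)) ^ k = 1 := fun k ↦ by rw [hg, one_zpow]
  refine ⟨e * Nat.gcdB d e, d * Nat.gcdA d e, ?_, ?_, ?_⟩
  · rw [← zpow_add, add_comm, ← Nat.gcd_eq_gcd_ab, hde.gcd_eq_one, Nat.cast_one, zpow_one]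
  · rw [← zpow_natCast, ← zpow_mul, ← key (Nat.gcdB d e), ← zpow_natCast, ← zpow_mul]
    push_cast; ring_nf
  · rw [← zpow_natCast, ← zpow_mul, ← key (Nat.gcdA d e), ← zpow_natCast, ← zpow_mul]
    push_cast; ring_nf

theorem exists_zpow_mul_zpow_eq_self_of_prime {r : ℕ} (hr : r.Prime) {g : G}
    (hg : IsOfFinOrder g) :
    ∃ i j : ℤ, g ^ i * g ^ j = g ∧ (∃ n, (g ^ i) ^ r ^ n = 1) ∧ ¬ r ∣ orderOf (g ^ j) := by
  have ho : orderOf g ≠ 0 := hg.orderOf_pos.ne'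
  obtain ⟨i, j, hij, hi, hj⟩ := exists_zpow_mul_zpow_eq_self
    ((Nat.coprime_ordCompl hr ho).pow_left ((orderOf g).factorization r))
    (by rw [Nat.ordProj_mul_ordCompl_eq_self, pow_orderOf_eq_one])
  exact ⟨i, j, hij, ⟨_, hi⟩,
    fun h ↦ Nat.not_dvd_ordCompl hr ho (h.trans (orderOf_dvd_of_pow_eq_one hj))⟩

theorem coprime_orderOf_of_pow_prime_pow_eq_one {r n : ℕ} (hr : r.Prime) {a m : G}
    (ha : a ^ r ^ n = 1) (hm : ¬ r ∣ orderOf m) : (orderOf a).Coprime (orderOf m) :=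
  ((hr.coprime_iff_not_dvd.mpr hm).pow_left n).coprime_dvd_left (orderOf_dvd_of_pow_eq_one ha)

theorem Commute.mem_zpowers_mul_left {u v : G} (h : Commute u v)
    (huv : (orderOf u).Coprime (orderOf v)) : u ∈ zpowers (u * v) := by
  obtain ⟨k, hk⟩ := exists_pow_eq_self_of_coprime huv.symm
  have := pow_mem (pow_mem (mem_zpowers (u * v)) (orderOf v)) k
  rwa [h.mul_pow, pow_orderOf_eq_one v, mul_one, hk] at this

theorem isPGroup_zpowers {p n : ℕ} {g : G} (hg : g ^ p ^ n = 1) : IsPGroup p (zpowers g) :=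
  IsPGroup.of_card_dvd_pow (n := n) (by rw [Nat.card_zpowers]; exact orderOf_dvd_of_pow_eq_one hg)

end Decomposition

section PGroup
variable {G : Type*} [Group G] [Finite G] {r : ℕ}

theorem IsPGroup.of_closure_eq_top (hr : r.Prime) {S : Set G} (hS : closure S = ⊤)
    (hSr : ∀ s ∈ S, ∃ n, s ^ r ^ n = 1) (hcen : ∀ g : G, ¬ r ∣ orderOf g → g ∈ center G) :
    IsPGroup r G := by
  have := Fact.mk hr
  -- The `r'`-part of every element is central, so `G ⧸ center G` is an `r`-group.
  have hquot : IsPGroup r (G ⧸ center G) := by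
    intro q
    obtain ⟨g, rfl⟩ := QuotientGroup.mk_surjective q
    obtain ⟨i, j, hij, ⟨n, hi⟩, hj⟩ := exists_zpow_mul_zpow_eq_self_of_prime hr
      (isOfFinOrder_of_finite g)
    refine ⟨n, ?_⟩
    rw [← hij, QuotientGroup.mk_mul, (QuotientGroup.eq_one_iff _).mpr (hcen _ hj), mul_one,
      ← QuotientGroup.mk_pow, hi, QuotientGroup.mk_one]
  have := hquot.isNilpotent
  have : Group.IsNilpotent G := Subgroup.isNilpotent_of_ker_le_center
    (QuotientGroup.mk' (center G)) (QuotientGroup.ker_mk' _).le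
  obtain ⟨P⟩ : Nonempty (Sylow r G) := inferInstance
  have hP : (P : Subgroup G) = ⊤ := by
    rw [eq_top_iff, ← hS, closure_le]
    intro s hs
    obtain ⟨n, hn⟩ := hSr s hs
    obtain ⟨Q, hQ⟩ := (isPGroup_zpowers hn).exists_le_sylow
    obtain ⟨g, rfl⟩ := MulAction.exists_smul_eq G P Q
    rw [Sylow.smul_eq_of_normal] at hQ
    exact hQ (mem_zpowers s)
  exact (hP ▸ P.isPGroup').of_equiv topEquiv

theorem isPGroup_closure_of_forall_commute (hr : r.Prime) {S : Set G}
    (hSr : ∀ s ∈ S, ∃ n, s ^ r ^ n = 1)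
    (hScomm : ∀ s ∈ S, ∀ g : G, ¬ r ∣ orderOf g → Commute s g) : IsPGroup r (closure S) := by
  refine IsPGroup.of_closure_eq_top hr closure_closure_coe_preimage
    (fun s hs ↦ (hSr s hs).imp fun n hn ↦ Subtype.ext (by simpa using hn)) fun g hg ↦ ?_
  rw [← orderOf_coe] at hg
  have hle : closure S ≤ centralizer {(g : G)} :=
    (closure_le _).mpr fun s hs ↦ mem_centralizer_singleton_iff.mpr (hScomm s hs g hg).eq
  exact mem_center_iff.mpr fun h ↦ Subtype.ext (mem_centralizer_singleton_iff.mp (hle h.2))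

theorem isPGroup_normalClosure_of_forall_commute (hr : r.Prime) {S : Set G}
    (hSr : ∀ s ∈ S, ∃ n, s ^ r ^ n = 1)
    (hScomm : ∀ s ∈ S, ∀ g : G, ¬ r ∣ orderOf g → Commute s g) :
    IsPGroup r (normalClosure S) := by
  have hconj : ∀ c ∈ Group.conjugatesOfSet S, ∃ s ∈ S, ∃ k : G, MulAut.conj k s = c :=
    fun c hc ↦
      let ⟨s, hs, hsc⟩ := Group.mem_conjugatesOfSet_iff.mp hc
      ⟨s, hs, isConj_iff.mp hsc⟩
  refine isPGroup_closure_of_forall_commute hr (fun c hc ↦ ?_) fun c hc g hg ↦ ?_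
  · obtain ⟨s, hs, k, rfl⟩ := hconj c hc
    exact (hSr s hs).imp fun n hn ↦ by rw [← map_pow, hn, map_one]
  · obtain ⟨s, hs, k, rfl⟩ := hconj c hc
    have := (hScomm s hs ((MulAut.conj k).symm g) (by rwa [MulEquiv.orderOf_eq])).map
      (MulAut.conj k)
    rwa [MulEquiv.apply_symm_apply] at this

end PGroup

section NilSet
variable {G : Type*} [Group G]

theorem isNilpotent_closure_pair_of_mem_zpowers {a b x y : G} (ha : a ∈ zpowers x)
    (hb : b ∈ zpowers y) (h : Group.IsNilpotent (closure ({x, y} : Set G))) :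
    Group.IsNilpotent (closure ({a, b} : Set G)) := by
  refine isNilpotent_of_le ((closure_le _).mpr ?_) h
  rintro c (rfl | rfl)
  · exact zpowers_le.mpr (subset_closure (by simp)) ha
  · exact zpowers_le.mpr (subset_closure (by simp)) hb

theorem isNilpotent_closure_pair_mul {u w g₁ g₂ : G} (huw : Commute u w)
    (hug₂ : Commute u g₂) (hwg₁ : Commute w g₁) (hg : Commute g₁ g₂)
    (h₁ : Group.IsNilpotent (closure ({u, g₁} : Set G)))
    (h₂ : Group.IsNilpotent (closure ({w, g₂} : Set G))) :
    Group.IsNilpotent (closure ({u * w, g₁ * g₂} : Set G)) := by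
  have hcent : closure {u, g₁} ≤ centralizer (closure ({w, g₂} : Set G)) := by
    rw [centralizer_closure, closure_le]
    rintro a (rfl | rfl) <;> rintro b (rfl | rfl)
    exacts [huw.eq.symm, hug₂.eq.symm, hwg₁.eq, hg.eq.symm]
  refine isNilpotent_of_le ((closure_le _).mpr ?_) (isNilpotent_sup_of_commute h₁ h₂
    fun a ha b hb ↦ (mem_centralizer_iff.mp (hcent ha) b hb).symm)
  rintro c (rfl | rfl) <;>
  exact mul_mem (mem_sup_left (subset_closure (by simp))) (mem_sup_right (subset_closure (by simp)))

theorem nonNilpGraph_adj_iff {x y : G} :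
    (nonNilpGraph G).Adj x y ↔ ¬ Group.IsNilpotent (closure ({x, y} : Set G)) :=
  ⟨And.right, fun h ↦ ⟨by rintro rfl; exact h (isNilpotent_closure_pair_of_commute (.refl x)), h⟩⟩

theorem nonNilpGraph_adj_of_mem_zpowers {a b x y : G} (ha : a ∈ zpowers x)
    (hb : b ∈ zpowers y) (h : (nonNilpGraph G).Adj a b) : (nonNilpGraph G).Adj x y :=
  nonNilpGraph_adj_iff.mpr fun hxy ↦ nonNilpGraph_adj_iff.mp h
    (isNilpotent_closure_pair_of_mem_zpowers ha hb hxy)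

theorem notMem_nilSet_iff_exists_adj {x : G} :
    x ∉ nilSet G ↔ ∃ y, (nonNilpGraph G).Adj x y := by
  simp [nilSet, nonNilpGraph_adj_iff]

variable [Finite G]

theorem commute_of_isNilpotent_closure_pair {x y : G}
    (h : Group.IsNilpotent (closure ({x, y} : Set G))) (hxy : (orderOf x).Coprime (orderOf y)) :
    Commute x y := by
  have := Group.IsNilpotent.commute_of_coprime_orderOf
    (u := (⟨x, subset_closure (by simp)⟩ : closure ({x, y} : Set G)))
    (v := ⟨y, subset_closure (by simp)⟩) (by simpa [orderOf_mk] using hxy)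
  exact this.map (closure ({x, y} : Set G)).subtype

theorem mul_mem_nilSet {r n : ℕ} (hr : r.Prime) {u w : G} (hu : u ∈ nilSet G)
    (hw : w ∈ nilSet G) (huw : Commute u w) (hur : u ^ r ^ n = 1) (hwr : ¬ r ∣ orderOf w) :
    u * w ∈ nilSet G := by
  intro g
  obtain ⟨i, j, hij, ⟨k, hi⟩, hj⟩ := exists_zpow_mul_zpow_eq_self_of_prime hr
    (isOfFinOrder_of_finite g)
  rw [← hij]
  exact isNilpotent_closure_pair_mul huw
    (commute_of_isNilpotent_closure_pair (hu _)
      (coprime_orderOf_of_pow_prime_pow_eq_one hr hur hj))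
    (commute_of_isNilpotent_closure_pair (hw _)
      (coprime_orderOf_of_pow_prime_pow_eq_one hr hi hwr).symm)
    (Commute.zpow_zpow_self g i j) (hu _) (hw _)

theorem mem_nilSet_of_forall_commute {r n : ℕ} (hr : r.Prime) {a : G} (ha : a ^ r ^ n = 1)
    (hcomm : ∀ g : G, ¬ r ∣ orderOf g → Commute a g) : a ∈ nilSet G := by
  have := Fact.mk hr
  have hN : IsPGroup r (normalClosure {a}) := isPGroup_normalClosure_of_forall_commute hr
    (by simpa using ⟨n, ha⟩) (by simpa using hcomm)
  intro g
  obtain ⟨i, j, hij, ⟨k, hi⟩, hj⟩ := exists_zpow_mul_zpow_eq_self_of_prime hr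
    (isOfFinOrder_of_finite g)
  have hi_nil : Group.IsNilpotent (closure ({a, g ^ i} : Set G)) := by
    refine isNilpotent_of_le ((closure_le _).mpr ?_)
      (hN.to_sup_of_normal_left (isPGroup_zpowers hi)).isNilpotent
    rintro c (rfl | rfl)
    exacts [mem_sup_left (subset_normalClosure rfl), mem_sup_right (mem_zpowers _)]
  have := isNilpotent_closure_pair_mul (Commute.one_right a) (hcomm _ hj) (Commute.one_left _)
    (Commute.zpow_zpow_self g i j) hi_nil
    (isNilpotent_closure_pair_of_commute (Commute.one_left (g ^ j)))
  rwa [mul_one, hij] at this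

theorem exists_adj_of_prime_pow_notMem_nilSet {r n : ℕ} (hr : r.Prime) {a : G}
    (ha : a ^ r ^ n = 1) (hna : a ∉ nilSet G) :
    ∃ m, ¬ r ∣ orderOf m ∧ (nonNilpGraph G).Adj a m := by
  by_contra! h
  refine hna (mem_nilSet_of_forall_commute hr ha fun g hg ↦ ?_)
  have hag := h g hg
  rw [nonNilpGraph_adj_iff, not_not] at hag
  exact commute_of_isNilpotent_closure_pair hag (coprime_orderOf_of_pow_prime_pow_eq_one hr ha hg)

theorem exists_prime_pow_mem_zpowers_notMem_nilSet {x : G} (hx : x ∉ nilSet G) :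
    ∃ r n a, r.Prime ∧ a ∈ zpowers x ∧ a ^ r ^ n = 1 ∧ a ∉ nilSet G := by
  induction hox : orderOf x using Nat.strong_induction_on generalizing x with
  | _ o ih =>
  have hr : (orderOf x).minFac.Prime := Nat.minFac_prime fun h ↦
    hx (orderOf_eq_one_iff.mp h ▸ fun y ↦ isNilpotent_closure_pair_of_commute (.one_left y))
  obtain ⟨i, j, hij, ⟨n, hi⟩, hj⟩ := exists_zpow_mul_zpow_eq_self_of_prime hr
    (isOfFinOrder_of_finite x)
  by_cases hxi : x ^ i ∈ nilSet G
  · have hxj : x ^ j ∉ nilSet G := fun hxj ↦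
      hx (hij ▸ mul_mem_nilSet hr hxi hxj (Commute.zpow_zpow_self x i j) hi hj)
    have hdvd : orderOf (x ^ j) ∣ orderOf x :=
      Nat.card_zpowers x ▸ (zpowers x).orderOf_dvd_natCard (zpow_mem (mem_zpowers x) j)
    have hlt : orderOf (x ^ j) < o := hox ▸ (Nat.le_of_dvd (orderOf_pos x) hdvd).lt_of_ne
      fun h ↦ hj (h ▸ Nat.minFac_dvd _)
    obtain ⟨q, k, a, hq, ha, hak, hna⟩ := ih _ hlt hxj rfl
    exact ⟨q, k, a, hq, zpowers_le.mpr (zpow_mem (mem_zpowers x) j) ha, hak, hna⟩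
  · exact ⟨_, n, x ^ i, hr, zpow_mem (mem_zpowers x) i, hi, hxi⟩

theorem Group.isNilpotent_of_forall_mem_nilSet (h : ∀ x : G, x ∈ nilSet G) :
    Group.IsNilpotent G := by
  refine (isNilpotent_of_finite_tfae.out 0 3).mpr fun r hr P ↦ ?_
  have hPr : ∀ s ∈ (P : Set G), ∃ n, s ^ r ^ n = 1 := fun s hs ↦
    (P.isPGroup' ⟨s, hs⟩).imp fun n hn ↦ by simpa using congrArg Subtype.val hn
  have hN := isPGroup_normalClosure_of_forall_commute hr.out hPr fun s hs g hg ↦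
    let ⟨_, hn⟩ := hPr s hs
    commute_of_isNilpotent_closure_pair (h s g)
      (coprime_orderOf_of_pow_prime_pow_eq_one hr.out hn hg)
  rw [← P.is_maximal' hN subset_normalClosure]
  infer_instance

end NilSet

theorem SimpleGraph.Walk.exists_induce_length_eq {V : Type*} {H : SimpleGraph V} {s : Set V}
    (hs : ∀ v w, H.Adj v w → v ∈ s) {u v : V} (p : H.Walk u v) (hu : u ∈ s) (hv : v ∈ s) :
    ∃ q : (H.induce s).Walk ⟨u, hu⟩ ⟨v, hv⟩, q.length = p.length := by
  have hsupp : ∀ {u v} (p : H.Walk u v), u ∈ s → ∀ x ∈ p.support, x ∈ s := by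
    intro u v p hu
    induction p with
    | nil => simpa using hu
    | cons h p ih =>
      intro x hx
      rw [support_cons, List.mem_cons] at hx
      rcases hx with rfl | hx
      exacts [hu, ih (hs _ _ h.symm) x hx]
  refine ⟨p.induce s (hsupp p hu), ?_⟩
  rw [← length_map (Embedding.induce s).toHom, map_induce]
  rfl

section Walks
variable {G : Type*} [Group G] [Finite G]

theorem exists_walk_length_le_three {x m b y : G} (hxm : (nonNilpGraph G).Adj x m)
    (hb : b ∉ nilSet G) (hby : b ∈ zpowers y) (hmb : (orderOf m).Coprime (orderOf b)) :
    ∃ p : (nonNilpGraph G).Walk x y, p.length ≤ 3 := by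
  by_cases hadj : (nonNilpGraph G).Adj m b
  · exact ⟨.cons hxm (.cons (nonNilpGraph_adj_of_mem_zpowers (mem_zpowers m) hby hadj) .nil),
      by simp⟩
  rw [nonNilpGraph_adj_iff, not_not] at hadj
  have hcomm := commute_of_isNilpotent_closure_pair hadj hmb
  have hm : m ∈ zpowers (m * b) := hcomm.mem_zpowers_mul_left hmb
  have hb' : b ∈ zpowers (m * b) := hcomm.eq ▸ hcomm.symm.mem_zpowers_mul_left hmb.symm
  obtain ⟨s, hbs⟩ := notMem_nilSet_iff_exists_adj.mp hb
  exact ⟨.cons (nonNilpGraph_adj_of_mem_zpowers (mem_zpowers x) hm hxm)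
    (.cons (nonNilpGraph_adj_of_mem_zpowers hb' (mem_zpowers s) hbs)
      (.cons (nonNilpGraph_adj_of_mem_zpowers (mem_zpowers s) hby hbs.symm) .nil)), by simp⟩

theorem exists_walk_length_le_four {x y : G} (hx : x ∉ nilSet G) (hy : y ∉ nilSet G) :
    ∃ p : (nonNilpGraph G).Walk x y, p.length ≤ 4 := by
  obtain ⟨q, k, a, hq, hax, hak, ha⟩ := exists_prime_pow_mem_zpowers_notMem_nilSet hx
  obtain ⟨w, l, b, hw, hby, hbl, hb⟩ := exists_prime_pow_mem_zpowers_notMem_nilSet hy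
  by_cases hqw : q = w
  · subst hqw
    obtain ⟨m, hqm, ham⟩ := exists_adj_of_prime_pow_notMem_nilSet hq hak ha
    obtain ⟨p, hp⟩ := exists_walk_length_le_three
      (nonNilpGraph_adj_of_mem_zpowers hax (mem_zpowers m) ham) hb hby
      (coprime_orderOf_of_pow_prime_pow_eq_one hq hbl hqm).symm
    exact ⟨p, by omega⟩
  · obtain ⟨t, hat⟩ := notMem_nilSet_iff_exists_adj.mp ha
    have hqb : ¬ q ∣ orderOf b := fun h ↦ hqw <| (Nat.prime_dvd_prime_iff_eq hq hw).mp <|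
      hq.dvd_of_dvd_pow (h.trans (orderOf_dvd_of_pow_eq_one hbl))
    obtain ⟨p, hp⟩ := exists_walk_length_le_three hat.symm hb hby
      (coprime_orderOf_of_pow_prime_pow_eq_one hq hak hqb)
    exact ⟨.cons (nonNilpGraph_adj_of_mem_zpowers hax (mem_zpowers t) hat) p, by simp; omega⟩

end Walks

theorem stmt18 {G : Type*} [Group G] [Finite G] (hnn : ¬ Group.IsNilpotent G) :
    ((nonNilpGraph G).induce {x : G | x ∉ nilSet G}).Connected ∧
    (∀ u v : {x : G | x ∉ nilSet G},
      ((nonNilpGraph G).induce {x : G | x ∉ nilSet G}).dist u v ≤ 6) ∧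
    (∀ u v : {x : G | x ∉ nilSet G},
      (orderOf (u : G)).primeFactors ≠ (orderOf (v : G)).primeFactors →
      ∃ p : ((nonNilpGraph G).induce {x : G | x ∉ nilSet G}).Walk u v, p.length ≤ 4) := by
  have hwalk : ∀ u v : {x : G | x ∉ nilSet G},
      ∃ p : ((nonNilpGraph G).induce {x : G | x ∉ nilSet G}).Walk u v, p.length ≤ 4 := by
    rintro ⟨u, hu⟩ ⟨v, hv⟩
    obtain ⟨p, hp⟩ := exists_walk_length_le_four hu hv
    obtain ⟨q, hq⟩ := p.exists_induce_length_eq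
      (fun x _ hxy ↦ notMem_nilSet_iff_exists_adj.mpr ⟨_, hxy⟩) hu hv
    exact ⟨q, hq ▸ hp⟩
  obtain ⟨x, hx⟩ : ∃ x : G, x ∉ nilSet G := by
    by_contra! h
    exact hnn (Group.isNilpotent_of_forall_mem_nilSet h)
  have : Nonempty {x : G | x ∉ nilSet G} := ⟨⟨x, hx⟩⟩
  refine ⟨⟨fun u v ↦ (hwalk u v).elim fun p _ ↦ p.reachable⟩, fun u v ↦ ?_,
    fun u v _ ↦ hwalk u v⟩
  obtain ⟨p, hp⟩ := hwalk u v
  exact (SimpleGraph.dist_le p).trans (by omega)
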